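/- Let H₁ and H₂ be separable real Hilbert spaces, and let (X,Y) be a pair of random variables in H₁×H₂ with E‖X‖² < ∞ and E‖Y‖² < ∞, so that the Bochner expectations EX ∈ H₁ and EY ∈ H₂ exist. Let (e_i)_i and (f_j)_j be Hilbert (orthonormal) bases of H₁ and H₂. Then, for β = 2: (a) t̃_X = −2·⟨X₁−EX, X₂−EX⟩ almost surely and t̃_Y = −2·⟨Y₁−EY, Y₂−EY⟩ almost surely; and (b) E[t̃_X t̃_Y] = 4·Σ_{i,j} Cov(⟨X,e_i⟩, ⟨Y,f_j⟩)², where the double series on the right converges. -/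

import Mathlib

open MeasureTheory ProbabilityTheory
open scoped RealInnerProductSpace

noncomputable section

/-- `ĥ_X := ‖X₁−X₂‖² − ‖X₂−X₃‖² + ‖X₃−X₄‖² − ‖X₄−X₁‖²` (the case `β = 2`), built from
four (independent) copies `X 0, X 1, X 2, X 3` of a random variable. -/
def hHat2 {Ω 𝒳 : Type*} [MetricSpace 𝒳] (X : Fin 4 → Ω → 𝒳) (ω : Ω) : ℝ :=
  dist (X 0 ω) (X 1 ω) ^ 2 - dist (X 1 ω) (X 2 ω) ^ 2
    + dist (X 2 ω) (X 3 ω) ^ 2 - dist (X 3 ω) (X 0 ω) ^ 2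

/-- `t̃_X := E(ĥ_X | X₁, X₂)` for `β = 2`. -/
def tTilde2 {Ω 𝒳 : Type*} [MetricSpace 𝒳] [MeasurableSpace 𝒳]
    {mΩ : MeasurableSpace Ω} (μ : Measure Ω) (X : Fin 4 → Ω → 𝒳) : Ω → ℝ :=
  μ[hHat2 X | MeasurableSpace.comap (fun ω => (X 0 ω, X 1 ω)) inferInstance]

/-!
Expanding the squared distances, the squared norms cancel and
`ĥ_X = 2 (⟪X₂, X₃⟫ + ⟪X₁, X₄⟫ - ⟪X₁, X₂⟫ - ⟪X₃, X₄⟫)`. Given `(X₁, X₂)`, the pull-out property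
of the conditional expectation for the bilinear map `⟪·, ·⟫`, together with independence, replaces
the copies `X₃, X₄` by their mean `EX`, and the result is `-2 ⟪X₁ - EX, X₂ - EX⟫`; this is (a).

For (b), Parseval's identity in both bases writes `⟪X₁ - EX, X₂ - EX⟫ ⟪Y₁ - EY, Y₂ - EY⟫` as the
double series `∑ φᵢⱼ(Z₁) φᵢⱼ(Z₂)` with `φᵢⱼ(x, y) = ⟪x - EX, eᵢ⟫ ⟪y - EY, fⱼ⟫`. By Cauchy–Schwarz in
`ℓ²` the series of absolute values is bounded by `‖X₁ - EX‖ ‖Y₁ - EY‖ · ‖X₂ - EX‖ ‖Y₂ - EY‖`, which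
is integrable as a product of independent integrable factors. So the series may be integrated
termwise, and by independence the `(i, j)` term integrates to
`(E φᵢⱼ(Z))² = Cov(⟪X, eᵢ⟫, ⟪Y, fⱼ⟫)²`.
-/

section

variable {ι κ E F : Type*} [NormedAddCommGroup E] [InnerProductSpace ℝ E]
  [NormedAddCommGroup F] [InnerProductSpace ℝ F]

theorem Orthonormal.countable [TopologicalSpace.SeparableSpace E] {v : ι → E}
    (hv : Orthonormal ℝ v) : Countable ι := by
  -- distinct vectors of the family are at distance `√2`, so the balls of radius `1/2` are disjoint
  refine Pairwise.countable_of_isOpen_disjoint (s := fun i => Metric.ball (v i) 2⁻¹)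
    (fun i j hij => Metric.ball_disjoint_ball ?_) (fun _ => Metric.isOpen_ball)
    (fun _ => Metric.nonempty_ball.2 (by norm_num))
  have : dist (v i) (v j) ^ 2 = 2 := by
    rw [dist_eq_norm, norm_sub_sq_real, hv.inner_eq_zero hij, hv.1 i, hv.1 j]
    norm_num
  nlinarith [dist_nonneg (x := v i) (y := v j)]

namespace HilbertBasis

theorem hasSum_real_inner_mul_inner (b : HilbertBasis ι ℝ E) (x y : E) :
    HasSum (fun i => ⟪x, b i⟫ * ⟪y, b i⟫) ⟪x, y⟫ := by
  simpa only [real_inner_comm (b _) y] using b.hasSum_inner_mul_inner x y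

theorem abs_real_inner_le_norm (b : HilbertBasis ι ℝ E) (x : E) (i : ι) : |⟪x, b i⟫| ≤ ‖x‖ := by
  simpa [b.orthonormal.1 i] using _root_.abs_real_inner_le_norm x (b i)

theorem summable_norm_inner_mul_inner_and_tsum_le (b : HilbertBasis ι ℝ E) (x y : E) :
    (Summable fun i => ‖⟪x, b i⟫ * ⟪y, b i⟫‖) ∧ ∑' i, ‖⟪x, b i⟫ * ⟪y, b i⟫‖ ≤ ‖x‖ * ‖y‖ := by
  have hpq : (2 : ENNReal).toReal.HolderConjugate (2 : ENNReal).toReal := by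
    simpa using Real.HolderConjugate.two_two
  simpa [b.repr_apply_apply, real_inner_comm, norm_mul] using
    lp.tsum_mul_le_mul_norm hpq (b.repr x) (b.repr y)

variable (e : HilbertBasis ι ℝ E) (f : HilbertBasis κ ℝ F) (a a' : E) (b b' : F)

theorem hasSum_inner_mul_inner_prod :
    HasSum (fun p : ι × κ => (⟪a, e p.1⟫ * ⟪b, f p.2⟫) * (⟪a', e p.1⟫ * ⟪b', f p.2⟫))
      (⟪a, a'⟫ * ⟪b, b'⟫) := by
  have hsum := summable_mul_of_summable_norm (e.summable_norm_inner_mul_inner_and_tsum_le a a').1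
    (f.summable_norm_inner_mul_inner_and_tsum_le b b').1
  have := (e.hasSum_real_inner_mul_inner a a').mul (f.hasSum_real_inner_mul_inner b b') hsum
  simpa only [mul_mul_mul_comm] using this

theorem summable_norm_inner_mul_inner_prod_and_tsum_le :
    (Summable fun p : ι × κ => ‖(⟪a, e p.1⟫ * ⟪b, f p.2⟫) * (⟪a', e p.1⟫ * ⟪b', f p.2⟫)‖) ∧
      ∑' p : ι × κ, ‖(⟪a, e p.1⟫ * ⟪b, f p.2⟫) * (⟪a', e p.1⟫ * ⟪b', f p.2⟫)‖
        ≤ (‖a‖ * ‖b‖) * (‖a'‖ * ‖b'‖) := by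
  obtain ⟨he, he_le⟩ := e.summable_norm_inner_mul_inner_and_tsum_le a a'
  obtain ⟨hf, hf_le⟩ := f.summable_norm_inner_mul_inner_and_tsum_le b b'
  have hterm : ∀ p : ι × κ, ‖(⟪a, e p.1⟫ * ⟪b, f p.2⟫) * (⟪a', e p.1⟫ * ⟪b', f p.2⟫)‖
      = ‖⟪a, e p.1⟫ * ⟪a', e p.1⟫‖ * ‖⟪b, f p.2⟫ * ⟪b', f p.2⟫‖ := fun p => by
    simp only [norm_mul]; ring
  simp only [hterm]
  have he' : Summable fun i => ‖‖⟪a, e i⟫ * ⟪a', e i⟫‖‖ := by simpa only [norm_norm] using he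
  have hf' : Summable fun j => ‖‖⟪b, f j⟫ * ⟪b', f j⟫‖‖ := by simpa only [norm_norm] using hf
  refine ⟨summable_mul_of_summable_norm he' hf', ?_⟩
  rw [← tsum_mul_tsum_of_summable_norm he' hf']
  calc _ ≤ (‖a‖ * ‖a'‖) * (‖b‖ * ‖b'‖) :=
        mul_le_mul he_le hf_le (tsum_nonneg fun _ => norm_nonneg _) (by positivity)
    _ = _ := by ring

end HilbertBasis

theorem hHat2_eq_inner {Ω : Type*} (X : Fin 4 → Ω → E) :
    hHat2 X = (2 : ℝ) • (((fun ω => ⟪X 1 ω, X 2 ω⟫) + fun ω => ⟪X 0 ω, X 3 ω⟫)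
      - ((fun ω => ⟪X 0 ω, X 1 ω⟫) + fun ω => ⟪X 2 ω, X 3 ω⟫)) := by
  funext ω
  simp only [hHat2, dist_eq_norm, norm_sub_sq_real, Pi.smul_apply, Pi.add_apply, Pi.sub_apply,
    smul_eq_mul, real_inner_comm (X 3 ω)]
  ring

end

section Probability

variable {Ω : Type*} {m mΩ : MeasurableSpace Ω} {μ : Measure Ω}

theorem hasSum_integral_of_tsum_norm_le {ι G : Type*} [Countable ι] [NormedAddCommGroup G]
    [NormedSpace ℝ G] [CompleteSpace G] {F : ι → Ω → G} {f : Ω → G} {M : Ω → ℝ}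
    (hF : ∀ i, Integrable (F i) μ) (hM : Integrable M μ)
    (hFf : ∀ᵐ ω ∂μ, HasSum (fun i => F i ω) (f ω))
    (hsum : ∀ᵐ ω ∂μ, Summable fun i => ‖F i ω‖) (hle : ∀ᵐ ω ∂μ, ∑' i, ‖F i ω‖ ≤ M ω) :
    HasSum (fun i => ∫ ω, F i ω ∂μ) (∫ ω, f ω ∂μ) := by
  have hnorm : Summable fun i => ∫ ω, ‖F i ω‖ ∂μ := by
    refine summable_of_sum_le (c := ∫ ω, M ω ∂μ)
      (fun i => integral_nonneg fun _ => norm_nonneg _) fun s => ?_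
    rw [← integral_finsetSum s fun i _ => (hF i).norm]
    refine integral_mono_ae (integrable_finsetSum s fun i _ => (hF i).norm) hM ?_
    filter_upwards [hsum, hle] with ω hω hωM
    exact (hω.sum_le_tsum s fun i _ => norm_nonneg _).trans hωM
  have hint : Summable fun i => ∫ ω, F i ω ∂μ :=
    hnorm.of_norm_bounded fun i => norm_integral_le_integral_norm _
  convert hint.hasSum using 1
  rw [integral_tsum_of_summable_integral_norm hF hnorm]
  exact integral_congr_ae (by filter_upwards [hFf] with ω hω using hω.tsum_eq.symm)

variable {E F : Type*} [NormedAddCommGroup E] [InnerProductSpace ℝ E] [CompleteSpace E]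
  [NormedAddCommGroup F] [InnerProductSpace ℝ F] [CompleteSpace F]

theorem covariance_inner_inner {X : Ω → E} {Y : Ω → F} (hX : Integrable X μ)
    (hY : Integrable Y μ) (u : E) (v : F) :
    cov[fun ω => ⟪X ω, u⟫, fun ω => ⟪Y ω, v⟫; μ]
      = ∫ ω, ⟪X ω - ∫ ω', X ω' ∂μ, u⟫ * ⟪Y ω - ∫ ω', Y ω' ∂μ, v⟫ ∂μ := by
  have hX' : ∫ ω, ⟪X ω, u⟫ ∂μ = ⟪∫ ω, X ω ∂μ, u⟫ := by
    simp only [real_inner_comm u]; exact integral_inner hX u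
  have hY' : ∫ ω, ⟪Y ω, v⟫ ∂μ = ⟪∫ ω, Y ω ∂μ, v⟫ := by
    simp only [real_inner_comm v]; exact integral_inner hY v
  simp only [covariance, inner_sub_left, hX', hY']

variable [SecondCountableTopology E] [MeasurableSpace E] [BorelSpace E]
  [SecondCountableTopology F] [MeasurableSpace F] [BorelSpace F]

theorem condExp_inner_ae_eq_inner_integral [IsFiniteMeasure μ]
    (hm : m ≤ mΩ) {U V : Ω → E} (hU : StronglyMeasurable[m] U) (hV : Measurable V)
    (hindep : Indep (MeasurableSpace.comap V inferInstance) m μ)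
    (hUV : Integrable (fun ω => ⟪U ω, V ω⟫) μ) (hVint : Integrable V μ) :
    μ[fun ω => ⟪U ω, V ω⟫ | m] =ᵐ[μ] fun ω => ⟪U ω, ∫ ω', V ω' ∂μ⟫ := by
  have hV_indep : μ[V | m] =ᵐ[μ] fun _ => ∫ ω', V ω' ∂μ :=
    condExp_indep_eq hV.comap_le hm (comap_measurable V).stronglyMeasurable hindep
  filter_upwards [condExp_bilin_of_stronglyMeasurable_left (innerSL ℝ) hU hUV hVint, hV_indep]
    with ω hω hVω
  rw [hVω] at hω
  exact hω

theorem condExp_inner_ae_eq_inner_integral_integral [IsProbabilityMeasure μ]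
    (hm : m ≤ mΩ) {U V : Ω → E} (hU : Measurable U) (hV : Measurable V)
    (hUV : IndepFun U V μ)
    (hindep : Indep (MeasurableSpace.comap (fun ω => (U ω, V ω)) inferInstance) m μ)
    (hUint : Integrable U μ) (hVint : Integrable V μ) :
    μ[fun ω => ⟪U ω, V ω⟫ | m] =ᵐ[μ] fun _ => ⟪∫ ω, U ω ∂μ, ∫ ω, V ω ∂μ⟫ := by
  have hint : ∫ ω, ⟪U ω, V ω⟫ ∂μ = ⟪∫ ω, U ω ∂μ, ∫ ω, V ω ∂μ⟫ :=
    hUV.integral_bilin hUint hVint (innerSL ℝ)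
  rw [← hint]
  exact condExp_indep_eq (hU.prodMk hV).comap_le hm
    ((measurable_fst.inner measurable_snd).comp (comap_measurable _)).stronglyMeasurable hindep

theorem tTilde2_ae_eq_of_iIndepFun [IsProbabilityMeasure μ] {X : Fin 4 → Ω → E}
    (hX : ∀ i, Measurable (X i)) (hindep : iIndepFun X μ) (hint : ∀ i, Integrable (X i) μ) :
    tTilde2 μ X =ᵐ[μ] fun ω => 2 * ((⟪X 1 ω, ∫ ω', X 2 ω' ∂μ⟫ + ⟪X 0 ω, ∫ ω', X 3 ω' ∂μ⟫)
      - (⟪X 0 ω, X 1 ω⟫ + ⟪∫ ω', X 2 ω' ∂μ, ∫ ω', X 3 ω' ∂μ⟫)) := by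
  unfold tTilde2
  set W := fun ω => (X 0 ω, X 1 ω)
  have hm : MeasurableSpace.comap W inferInstance ≤ mΩ := ((hX 0).prodMk (hX 1)).comap_le
  let P : Fin 4 → Fin 4 → Ω → ℝ := fun i j ω => ⟪X i ω, X j ω⟫
  have hP : ∀ i j, i ≠ j → Integrable (P i j) μ := fun i j hij =>
    (hindep.indepFun hij).integrable_bilin (hint i) (hint j) (innerSL ℝ)
  have hindep_W : ∀ k, k ≠ 0 → k ≠ 1 →
      Indep (MeasurableSpace.comap (X k) inferInstance) (MeasurableSpace.comap W inferInstance) μ :=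
    fun k h0 h1 =>
      ((IndepFun_iff_Indep _ _ _).1 (hindep.indepFun_prodMk hX 0 1 k h0.symm h1.symm)).symm
  have hA : μ[P 0 1 | MeasurableSpace.comap W inferInstance] = P 0 1 :=
    condExp_of_stronglyMeasurable hm
      ((measurable_fst.inner measurable_snd).comp (comap_measurable W)).stronglyMeasurable
      (hP 0 1 (by decide))
  have hB := condExp_inner_ae_eq_inner_integral hm (U := X 1)
    (measurable_snd.comp (comap_measurable W)).stronglyMeasurable (hX 2)
    (hindep_W 2 (by decide) (by decide)) (hP 1 2 (by decide)) (hint 2)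
  have hD := condExp_inner_ae_eq_inner_integral hm (U := X 0)
    (measurable_fst.comp (comap_measurable W)).stronglyMeasurable (hX 3)
    (hindep_W 3 (by decide) (by decide)) (hP 0 3 (by decide)) (hint 3)
  have hC := condExp_inner_ae_eq_inner_integral_integral hm (hX 2) (hX 3)
    (hindep.indepFun (by decide))
    ((IndepFun_iff_Indep _ _ _).1 (hindep.indepFun_prodMk_prodMk hX 2 3 0 1
      (by decide) (by decide) (by decide) (by decide))) (hint 2) (hint 3)
  calc μ[hHat2 X | MeasurableSpace.comap W inferInstance]
      =ᵐ[μ] (2 : ℝ) • ((μ[P 1 2 | MeasurableSpace.comap W inferInstance]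
          + μ[P 0 3 | MeasurableSpace.comap W inferInstance])
        - (μ[P 0 1 | MeasurableSpace.comap W inferInstance]
          + μ[P 2 3 | MeasurableSpace.comap W inferInstance])) := by
        rw [hHat2_eq_inner]
        refine (condExp_smul _ _ _).trans (Filter.EventuallyEq.const_smul ?_ _)
        exact (condExp_sub ((hP 1 2 (by decide)).add (hP 0 3 (by decide)))
          ((hP 0 1 (by decide)).add (hP 2 3 (by decide))) _).trans
          ((condExp_add (hP 1 2 (by decide)) (hP 0 3 (by decide)) _).sub
            (condExp_add (hP 0 1 (by decide)) (hP 2 3 (by decide)) _))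
    _ =ᵐ[μ] _ := ((hB.add hD).sub ((Filter.EventuallyEq.of_eq hA).add hC)).const_smul _

theorem tTilde2_ae_eq [IsProbabilityMeasure μ] {X : Fin 4 → Ω → E} {X' : Ω → E}
    (hX : ∀ i, Measurable (X i)) (hindep : iIndepFun X μ)
    (hid : ∀ i, IdentDistrib (X i) X' μ μ) (hX' : Integrable X' μ) :
    tTilde2 μ X =ᵐ[μ] fun ω => -2 * ⟪X 0 ω - ∫ ω', X' ω' ∂μ, X 1 ω - ∫ ω', X' ω' ∂μ⟫ := by
  filter_upwards [tTilde2_ae_eq_of_iIndepFun hX hindep fun i => (hid i).integrable_iff.2 hX']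
    with ω hω
  rw [hω, (hid 2).integral_eq, (hid 3).integral_eq, inner_sub_left, inner_sub_right,
    inner_sub_right, real_inner_comm (X 1 ω) (∫ ω', X' ω' ∂μ)]
  ring

theorem ProbabilityTheory.IndepFun.integrable_comp_mul_comp_of_identDistrib
    {α : Type*} [MeasurableSpace α] {Z Z₀ Z₁ : Ω → α} (hindep : IndepFun Z₀ Z₁ μ)
    (hZ₀ : IdentDistrib Z₀ Z μ μ) (hZ₁ : IdentDistrib Z₁ Z μ μ) {φ : α → ℝ} (hφ : Measurable φ)
    (hφZ : Integrable (fun ω => φ (Z ω)) μ) :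
    Integrable (fun ω => φ (Z₀ ω) * φ (Z₁ ω)) μ :=
  (hindep.comp hφ hφ).integrable_mul ((hZ₀.comp hφ).integrable_iff.2 hφZ)
    ((hZ₁.comp hφ).integrable_iff.2 hφZ)

theorem ProbabilityTheory.IndepFun.integral_comp_mul_comp_of_identDistrib
    {α : Type*} [MeasurableSpace α] {Z Z₀ Z₁ : Ω → α} (hindep : IndepFun Z₀ Z₁ μ)
    (hZ₀ : IdentDistrib Z₀ Z μ μ) (hZ₁ : IdentDistrib Z₁ Z μ μ) {φ : α → ℝ} (hφ : Measurable φ) :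
    ∫ ω, φ (Z₀ ω) * φ (Z₁ ω) ∂μ = (∫ ω, φ (Z ω) ∂μ) ^ 2 := by
  have h₀ : ∫ ω, φ (Z₀ ω) ∂μ = ∫ ω, φ (Z ω) ∂μ := (hZ₀.comp hφ).integral_eq
  have h₁ : ∫ ω, φ (Z₁ ω) ∂μ = ∫ ω, φ (Z ω) ∂μ := (hZ₁.comp hφ).integral_eq
  rw [hindep.integral_fun_comp_mul_comp hZ₀.aemeasurable_fst hZ₁.aemeasurable_fst
    hφ.aestronglyMeasurable hφ.aestronglyMeasurable, h₀, h₁, sq]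

theorem hasSum_covariance_inner_sq [IsProbabilityMeasure μ] {ι κ : Type*}
    (e : HilbertBasis ι ℝ E) (f : HilbertBasis κ ℝ F) {Z Z₀ Z₁ : Ω → E × F}
    (hZ₀ : IdentDistrib Z₀ Z μ μ) (hZ₁ : IdentDistrib Z₁ Z μ μ) (hindep : IndepFun Z₀ Z₁ μ)
    (hX : MemLp (fun ω => (Z ω).1) 2 μ) (hY : MemLp (fun ω => (Z ω).2) 2 μ) :
    HasSum (fun p : ι × κ => cov[fun ω => ⟪(Z ω).1, e p.1⟫, fun ω => ⟪(Z ω).2, f p.2⟫; μ] ^ 2)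
      (∫ ω, ⟪(Z₀ ω).1 - ∫ ω', (Z ω').1 ∂μ, (Z₁ ω).1 - ∫ ω', (Z ω').1 ∂μ⟫
        * ⟪(Z₀ ω).2 - ∫ ω', (Z ω').2 ∂μ, (Z₁ ω).2 - ∫ ω', (Z ω').2 ∂μ⟫ ∂μ) := by
  have := e.orthonormal.countable
  have := f.orthonormal.countable
  set m := ∫ ω', (Z ω').1 ∂μ
  set n := ∫ ω', (Z ω').2 ∂μ
  let φ : ι × κ → E × F → ℝ := fun p z => ⟪z.1 - m, e p.1⟫ * ⟪z.2 - n, f p.2⟫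
  let N : E × F → ℝ := fun z => ‖z.1 - m‖ * ‖z.2 - n‖
  have hφ : ∀ p, Measurable (φ p) := fun p => by fun_prop
  have hN : Measurable N := by fun_prop
  have hNZ : Integrable (fun ω => N (Z ω)) μ :=
    (hX.sub (memLp_const m)).norm.integrable_mul (hY.sub (memLp_const n)).norm
  have hφZ : ∀ p, Integrable (fun ω => φ p (Z ω)) μ := fun p =>
    hNZ.mono' ((hφ p).comp_aemeasurable hZ₀.aemeasurable_snd).aestronglyMeasurable
      (ae_of_all _ fun ω => by
        rw [norm_mul]
        exact mul_le_mul (e.abs_real_inner_le_norm _ _) (f.abs_real_inner_le_norm _ _)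
          (abs_nonneg _) (norm_nonneg _))
  have hsum := hasSum_integral_of_tsum_norm_le
    (F := fun p ω => φ p (Z₀ ω) * φ p (Z₁ ω)) (M := fun ω => N (Z₀ ω) * N (Z₁ ω))
    (fun p => hindep.integrable_comp_mul_comp_of_identDistrib hZ₀ hZ₁ (hφ p) (hφZ p))
    (hindep.integrable_comp_mul_comp_of_identDistrib hZ₀ hZ₁ hN hNZ)
    (ae_of_all _ fun ω => e.hasSum_inner_mul_inner_prod f _ _ _ _)
    (ae_of_all _ fun ω => (e.summable_norm_inner_mul_inner_prod_and_tsum_le f _ _ _ _).1)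
    (ae_of_all _ fun ω => (e.summable_norm_inner_mul_inner_prod_and_tsum_le f _ _ _ _).2)
  simp only [hindep.integral_comp_mul_comp_of_identDistrib hZ₀ hZ₁ (hφ _)] at hsum
  simpa only [covariance_inner_inner (hX.integrable one_le_two) (hY.integrable one_le_two)]
    using hsum

end Probability

/-- Let `H₁`, `H₂` be separable real Hilbert spaces and `(X,Y)` a
pair of random variables in `H₁×H₂` with `E‖X‖² < ∞`, `E‖Y‖² < ∞`, and let `(e_i)`,
`(f_j)` be Hilbert bases. Then, for `β = 2`:
(a) `t̃_X = −2⟪X₁−EX, X₂−EX⟫` a.s. and `t̃_Y = −2⟪Y₁−EY, Y₂−EY⟫` a.s.;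
(b) `E[t̃_X t̃_Y] = 4·Σ_{i,j} Cov(⟪X,e_i⟫, ⟪Y,f_j⟫)²`, the double series converging. -/
theorem stmt11 {Ω : Type*} [MeasurableSpace Ω] (μ : Measure Ω) [IsProbabilityMeasure μ]
    {H₁ H₂ : Type*}
    [NormedAddCommGroup H₁] [InnerProductSpace ℝ H₁] [CompleteSpace H₁]
    [SecondCountableTopology H₁] [MeasurableSpace H₁] [BorelSpace H₁]
    [NormedAddCommGroup H₂] [InnerProductSpace ℝ H₂] [CompleteSpace H₂]
    [SecondCountableTopology H₂] [MeasurableSpace H₂] [BorelSpace H₂]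
    {ι κ : Type*} (e : HilbertBasis ι ℝ H₁) (f : HilbertBasis κ ℝ H₂)
    (Z : Ω → H₁ × H₂) (Zs : Fin 4 → Ω → H₁ × H₂)
    (hZm : Measurable Z) (hZsm : ∀ i, Measurable (Zs i))
    (hindep : iIndepFun Zs μ)
    (hid : ∀ i, IdentDistrib (Zs i) Z μ μ)
    (hmomX : Integrable (fun ω => ‖(Z ω).1‖ ^ 2) μ)
    (hmomY : Integrable (fun ω => ‖(Z ω).2‖ ^ 2) μ) :
    -- (a)
    (tTilde2 μ (fun i ω => (Zs i ω).1) =ᵐ[μ]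
        fun ω => -2 * ⟪(Zs 0 ω).1 - ∫ ω', (Z ω').1 ∂μ, (Zs 1 ω).1 - ∫ ω', (Z ω').1 ∂μ⟫) ∧
    (tTilde2 μ (fun i ω => (Zs i ω).2) =ᵐ[μ]
        fun ω => -2 * ⟪(Zs 0 ω).2 - ∫ ω', (Z ω').2 ∂μ, (Zs 1 ω).2 - ∫ ω', (Z ω').2 ∂μ⟫) ∧
    -- (b)
    Summable (fun ij : ι × κ =>
      ((∫ ω, ⟪(Z ω).1, e ij.1⟫ * ⟪(Z ω).2, f ij.2⟫ ∂μ)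
        - (∫ ω, ⟪(Z ω).1, e ij.1⟫ ∂μ) * (∫ ω, ⟪(Z ω).2, f ij.2⟫ ∂μ)) ^ 2) ∧
    (∫ ω, tTilde2 μ (fun i ω => (Zs i ω).1) ω * tTilde2 μ (fun i ω => (Zs i ω).2) ω ∂μ)
      = 4 * ∑' ij : ι × κ,
          ((∫ ω, ⟪(Z ω).1, e ij.1⟫ * ⟪(Z ω).2, f ij.2⟫ ∂μ)
            - (∫ ω, ⟪(Z ω).1, e ij.1⟫ ∂μ) * (∫ ω, ⟪(Z ω).2, f ij.2⟫ ∂μ)) ^ 2 := by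
  have hX : MemLp (fun ω => (Z ω).1) 2 μ :=
    (memLp_two_iff_integrable_sq_norm hZm.fst.aestronglyMeasurable).2 hmomX
  have hY : MemLp (fun ω => (Z ω).2) 2 μ :=
    (memLp_two_iff_integrable_sq_norm hZm.snd.aestronglyMeasurable).2 hmomY
  have haX := tTilde2_ae_eq (X' := fun ω => (Z ω).1) (fun i => (hZsm i).fst)
    (hindep.comp (fun _ => Prod.fst) fun _ => measurable_fst)
    (fun i => (hid i).comp measurable_fst) (hX.integrable one_le_two)
  have haY := tTilde2_ae_eq (X' := fun ω => (Z ω).2) (fun i => (hZsm i).snd)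
    (hindep.comp (fun _ => Prod.snd) fun _ => measurable_snd)
    (fun i => (hid i).comp measurable_snd) (hY.integrable one_le_two)
  have hb := hasSum_covariance_inner_sq e f (hid 0) (hid 1) (hindep.indepFun zero_ne_one) hX hY
  simp only [covariance_eq_sub (hX.inner_const _) (hY.inner_const _), Pi.mul_apply] at hb
  refine ⟨haX, haY, hb.summable, ?_⟩
  rw [hb.tsum_eq, ← integral_const_mul]
  refine integral_congr_ae ?_
  filter_upwards [haX, haY] with ω hωX hωY
  rw [hωX, hωY]
  ring
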